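/- arXiv:1511.03114 — 2 statements merged into one kernel-verified Lean document; each statement's English description precedes it below -/
import Mathlib

section
/- For the 4×10 matrices A^(0), A^(1), A^(2), A^(3) defining the linearized compressible Euler operator, the matrix 𝔸(w) = w_0 A^(0) + w_1 A^(1) + w_2 A^(2) + w_3 A^(3) has rank exactly 4 for every unit vector w ∈ ℝ⁴ (indeed for every nonzero w ∈ ℝ⁴). -/
open Matrix

/-- The four 4×10 matrices of the linearized compressible Euler operator. -/
def AL : Fin 4 → Matrix (Fin 4) (Fin 10) ℝ
  | 0 => !![1,0,0,0,0,0,0,0,0,0;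
            0,1,0,0,0,0,0,0,0,0;
            0,0,1,0,0,0,0,0,0,0;
            0,0,0,1,0,0,0,0,0,0]
  | 1 => !![0,1,0,0,0,0,0,0,0,0;
            0,0,0,0,1,0,0,0,0,1;
            0,0,0,0,0,1,0,0,0,0;
            0,0,0,0,0,0,1,0,0,0]
  | 2 => !![0,0,1,0,0,0,0,0,0,0;
            0,0,0,0,0,1,0,0,0,0;
            0,0,0,0,0,0,0,1,0,1;
            0,0,0,0,0,0,0,0,1,0]
  | 3 => !![0,0,0,1,0,0,0,0,0,0;
            0,0,0,0,0,0,1,0,0,0;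
            0,0,0,0,0,0,0,0,1,0;
            0,0,0,0,-1,0,0,-1,0,1]

/-! The rows of 𝔸(w) are independent: a vector v with v 𝔸(w) = 0 satisfies ten bilinear
equations in (w, v), and explicit combinations of them give |w|² vᵢ = 0 for each i. -/

theorem Matrix.rank_eq_card_height_of_vecMul_eq_zero {m n K : Type*} [Fintype m] [Fintype n]
    [Field K] {M : Matrix m n K} (hM : ∀ v, v ᵥ* M = 0 → v = 0) : M.rank = Fintype.card m :=
  LinearIndependent.rank_matrix <| vecMul_injective_iff.mp <|
    (injective_iff_map_eq_zero M.vecMulLinear).mpr hM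

lemma vecMul_sum_smul_AL (w v : Fin 4 → ℝ) :
    v ᵥ* (∑ i, w i • AL i) =
      ![w 0 * v 0, w 1 * v 0 + w 0 * v 1, w 2 * v 0 + w 0 * v 2, w 3 * v 0 + w 0 * v 3,
        w 1 * v 1 - w 3 * v 3, w 2 * v 1 + w 1 * v 2, w 3 * v 1 + w 1 * v 3,
        w 2 * v 2 - w 3 * v 3, w 3 * v 2 + w 2 * v 3, w 1 * v 1 + w 2 * v 2 + w 3 * v 3] := by
  ext j
  fin_cases j <;> simp [vecMul, dotProduct, Fin.sum_univ_four, AL] <;> ring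

lemma eq_zero_of_vecMul_sum_smul_AL_eq_zero {w v : Fin 4 → ℝ} (hw : w ≠ 0)
    (hv : v ᵥ* (∑ i, w i • AL i) = 0) : v = 0 := by
  have hs : w 0 ^ 2 + w 1 ^ 2 + w 2 ^ 2 + w 3 ^ 2 ≠ 0 := by
    simpa [dotProduct, Fin.sum_univ_four, ← sq] using mt dotProduct_self_eq_zero.mp hw
  rw [vecMul_sum_smul_AL] at hv
  have E0 : w 0 * v 0 = 0 := by simpa using congrFun hv 0
  have E1 : w 1 * v 0 + w 0 * v 1 = 0 := by simpa using congrFun hv 1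
  have E2 : w 2 * v 0 + w 0 * v 2 = 0 := by simpa using congrFun hv 2
  have E3 : w 3 * v 0 + w 0 * v 3 = 0 := by simpa using congrFun hv 3
  have E4 : w 1 * v 1 - w 3 * v 3 = 0 := by simpa using congrFun hv 4
  have E5 : w 2 * v 1 + w 1 * v 2 = 0 := by simpa using congrFun hv 5
  have E6 : w 3 * v 1 + w 1 * v 3 = 0 := by simpa using congrFun hv 6
  have E7 : w 2 * v 2 - w 3 * v 3 = 0 := by simpa using congrFun hv 7
  have E8 : w 3 * v 2 + w 2 * v 3 = 0 := by simpa using congrFun hv 8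
  have E9 : w 1 * v 1 + w 2 * v 2 + w 3 * v 3 = 0 := by simpa using congrFun hv 9
  -- Trace-freeness of U gives w₁v₁ = w₃v₃ = w₂v₂ (E4, E7); the pressure column adds E9.
  have h3 : w 3 * v 3 = 0 := by linear_combination (E9 - E4 - E7) / 3
  have h1 : w 1 * v 1 = 0 := by linear_combination E4 + h3
  have h2 : w 2 * v 2 = 0 := by linear_combination E7 + h3
  have hv0 : (w 0 ^ 2 + w 1 ^ 2 + w 2 ^ 2 + w 3 ^ 2) * v 0 = 0 := by
    linear_combination w 0 * E0 + w 1 * E1 + w 2 * E2 + w 3 * E3 - w 0 * (h1 + h2 + h3)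
  have hv1 : (w 0 ^ 2 + w 1 ^ 2 + w 2 ^ 2 + w 3 ^ 2) * v 1 = 0 := by
    linear_combination w 0 * E1 - w 1 * E0 + w 2 * E5 + w 3 * E6 + w 1 * (h1 - h2 - h3)
  have hv2 : (w 0 ^ 2 + w 1 ^ 2 + w 2 ^ 2 + w 3 ^ 2) * v 2 = 0 := by
    linear_combination w 0 * E2 - w 2 * E0 + w 1 * E5 + w 3 * E8 + w 2 * (h2 - h1 - h3)
  have hv3 : (w 0 ^ 2 + w 1 ^ 2 + w 2 ^ 2 + w 3 ^ 2) * v 3 = 0 := by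
    linear_combination w 0 * E3 - w 3 * E0 + w 1 * E6 + w 2 * E8 + w 3 * (h3 - h1 - h2)
  ext i
  fin_cases i
  exacts [(mul_eq_zero.mp hv0).resolve_left hs, (mul_eq_zero.mp hv1).resolve_left hs,
    (mul_eq_zero.mp hv2).resolve_left hs, (mul_eq_zero.mp hv3).resolve_left hs]

/-- The linearized compressible Euler operator has the constant rank property with r = 4:
the symbol 𝔸(w) = Σᵢ wᵢ A⁽ⁱ⁾ has rank exactly 4 for every nonzero w ∈ ℝ⁴
(in particular for every unit vector). -/
theorem constant_rank_linearized_euler (w : Fin 4 → ℝ) (hw : w ≠ 0) :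
    (∑ i : Fin 4, w i • AL i).rank = 4 :=
  Matrix.rank_eq_card_height_of_vecMul_eq_zero fun _ ↦ eq_zero_of_vecMul_sum_smul_AL_eq_zero hw
end

section
/- Let z = (ρ, m, U, q) with ρ ∈ ℝ, m ∈ ℝ³, U ∈ S³₀ (symmetric trace-free 3×3), q ∈ ℝ, and let Z be the 4×4 matrix [[ρ, mᵀ],[m, U + qI₃]]. If U = m⊗m/ρ − (|m|²/(3ρ)) I₃ and q = p(ρ) + |m|²/(3ρ) with ρ > 0, then det Z = ρ · p(ρ)³. -/
open Matrix

set_option maxHeartbeats 2000000 in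
/-- For a 'lifted' state coming from a genuine Euler state (ρ, m) with ρ > 0, i.e.
U = m⊗m/ρ − (|m|²/(3ρ)) I₃ and q = p(ρ) + |m|²/(3ρ), the associated symmetric 4×4 matrix
Z = [[ρ, mᵀ], [m, U + q I₃]] has determinant ρ · p(ρ)³. -/

theorem det_lifted_state (p : ℝ → ℝ) (ρ : ℝ) (hρ : 0 < ρ)
    (m : Fin 3 → ℝ) (U : Matrix (Fin 3) (Fin 3) ℝ) (q : ℝ)
    (hU : U = Matrix.of (fun i j =>
      m i * m j / ρ - (if i = j then (∑ k, (m k)^2) / (3 * ρ) else 0)))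
    (hq : q = p ρ + (∑ k, (m k)^2) / (3 * ρ)) :
    (!![ρ, m 0, m 1, m 2;
        m 0, U 0 0 + q, U 0 1, U 0 2;
        m 1, U 1 0, U 1 1 + q, U 1 2;
        m 2, U 2 0, U 2 1, U 2 2 + q] : Matrix (Fin 4) (Fin 4) ℝ).det
      = ρ * (p ρ)^3 := by
  subst hU hq
  have h : (!![ρ, m 0, m 1, m 2;
        m 0, (Matrix.of (fun i j =>
      m i * m j / ρ - (if i = j then (∑ k, (m k)^2) / (3 * ρ) else 0))) 0 0 + (p ρ + (∑ k, (m k)^2) / (3 * ρ)),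
          (Matrix.of (fun i j =>
      m i * m j / ρ - (if i = j then (∑ k, (m k)^2) / (3 * ρ) else 0))) 0 1,
          (Matrix.of (fun i j =>
      m i * m j / ρ - (if i = j then (∑ k, (m k)^2) / (3 * ρ) else 0))) 0 2;
        m 1, (Matrix.of (fun i j =>
      m i * m j / ρ - (if i = j then (∑ k, (m k)^2) / (3 * ρ) else 0))) 1 0,
          (Matrix.of (fun i j =>
      m i * m j / ρ - (if i = j then (∑ k, (m k)^2) / (3 * ρ) else 0))) 1 1 + (p ρ + (∑ k, (m k)^2) / (3 * ρ)),
          (Matrix.of (fun i j =>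
      m i * m j / ρ - (if i = j then (∑ k, (m k)^2) / (3 * ρ) else 0))) 1 2;
        m 2, (Matrix.of (fun i j =>
      m i * m j / ρ - (if i = j then (∑ k, (m k)^2) / (3 * ρ) else 0))) 2 0,
          (Matrix.of (fun i j =>
      m i * m j / ρ - (if i = j then (∑ k, (m k)^2) / (3 * ρ) else 0))) 2 1,
          (Matrix.of (fun i j =>
      m i * m j / ρ - (if i = j then (∑ k, (m k)^2) / (3 * ρ) else 0))) 2 2 + (p ρ + (∑ k, (m k)^2) / (3 * ρ))]
      : Matrix (Fin 4) (Fin 4) ℝ)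
      = !![ρ, m 0, m 1, m 2;
        m 0, m 0 * m 0 / ρ + p ρ, m 0 * m 1 / ρ, m 0 * m 2 / ρ;
        m 1, m 1 * m 0 / ρ, m 1 * m 1 / ρ + p ρ, m 1 * m 2 / ρ;
        m 2, m 2 * m 0 / ρ, m 2 * m 1 / ρ, m 2 * m 2 / ρ + p ρ] := by
    ext i j
    fin_cases i <;> fin_cases j <;>
      simp [Fin.sum_univ_three] <;> ring
  rw [h]
  have h3 : ρ ≠ 0 := ne_of_gt hρ
  simp [Matrix.det_succ_row_zero, Fin.sum_univ_succ, Matrix.det_fin_three,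
    show Fin.succAbove (1:Fin 4) 2 = 3 from rfl, show Fin.succAbove (2:Fin 4) 1 = 1 from rfl,
    show Fin.succAbove (2:Fin 4) 2 = 3 from rfl, show Fin.succAbove (1:Fin 4) 1 = 2 from rfl,
    show Fin.succAbove (0:Fin 4) 0 = 1 from rfl, show Fin.succAbove (0:Fin 4) 1 = 2 from rfl,
    show Fin.succAbove (0:Fin 4) 2 = 3 from rfl, show Fin.succAbove (1:Fin 4) 0 = 0 from rfl,
    show Fin.succAbove (2:Fin 4) 0 = 0 from rfl, show Fin.succAbove (3:Fin 4) 0 = 0 from rfl,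
    show Fin.succAbove (3:Fin 4) 1 = 1 from rfl, show Fin.succAbove (3:Fin 4) 2 = 2 from rfl,
    show Fin.castSucc (2:Fin 3) = 2 from rfl]
  field_simp
  ring
end
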